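/- Let p be a prime, K a field of characteristic p, and A a cyclic group of order p with generator σ. Let a′ ≥ 1, let W = K[A]^{a′}, and let U ⊆ W be a K[A]-submodule isomorphic to J_r for some 1 ≤ r ≤ p. If V is a direct summand of W containing U which is minimal among direct summands of W containing U (i.e., no direct summand of W properly contained in V contains U), then V ≅ K[A]. -/

import Mathlib

/-!
`K[A]` is a local ring whose maximal ideal is generated by the nilpotent element `x = σ - 1`.
Write `U = K[A] u` with `u ≠ 0` and pick `v ∈ V` with `u = x ^ k v` and `v ∉ x V`. As `V` is a
direct summand of `W`, even `v ∉ x W`, so some coordinate of `v` is a unit. Scaling that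
coordinate projection by the inverse unit gives `f : W → K[A]` with `f v = 1`; hence `K[A] v` is
free of rank one and a direct summand of `W`. It contains `U` and lies in `V`, so by minimality
it is `V`.
-/

/-- The indecomposable `K[A]`-module `J_ℓ = K[A]/((σ-1)^ℓ)` for a cyclic group
`A = ⟨σ⟩` of order `p`. -/
abbrev Jmod (K : Type) [Field K] (A : Type) [CommGroup A] (σ : A) (ℓ : ℕ) :=
  MonoidAlgebra K A ⧸ Ideal.span {(MonoidAlgebra.of K A σ - 1) ^ ℓ}

open Submodule

namespace MonoidAlgebra

variable {k G : Type*} [CommRing k] [CommMonoid G]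

theorem of_sub_one_pow_char_eq_zero (p : ℕ) [Fact p.Prime] [CharP k p] {σ : G}
    (hσ : σ ^ p = 1) :
    (of k G σ - 1) ^ p = 0 := by
  have := charP_of_injective_algebraMap' k (A := MonoidAlgebra k G) p
  rw [sub_pow_char, one_pow, ← map_pow, hσ, map_one, sub_self]

theorem exists_sub_algebraMap_mem_span_of_sub_one {σ : G}
    (hσ : ∀ g : G, g ∈ Submonoid.powers σ) (c : MonoidAlgebra k G) :
    ∃ a : k, c - algebraMap k _ a ∈ Ideal.span {of k G σ - 1} := by
  induction c using MonoidAlgebra.induction_on with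
  | of g =>
    obtain ⟨n, rfl⟩ := hσ g
    refine ⟨1, ?_⟩
    rw [map_one, map_pow, Ideal.mem_span_singleton]
    exact sub_one_dvd_pow_sub_one _ _
  | add c d hc hd =>
    obtain ⟨a, ha⟩ := hc
    obtain ⟨b, hb⟩ := hd
    exact ⟨a + b, by simpa [map_add, add_sub_add_comm] using add_mem ha hb⟩
  | smul b c hc =>
    obtain ⟨a, ha⟩ := hc
    refine ⟨b * a, ?_⟩
    simpa [Algebra.smul_def, mul_sub] using Ideal.mul_mem_left _ (algebraMap k _ b) ha

end MonoidAlgebra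

theorem mem_span_singleton_or_isUnit_of_isNilpotent {K R : Type*} [Field K] [CommRing R]
    [Algebra K R] {x : R} (hx : IsNilpotent x)
    (hR : ∀ c : R, ∃ a : K, c - algebraMap K R a ∈ Ideal.span {x}) (b : R) :
    b ∈ Ideal.span {x} ∨ IsUnit b := by
  obtain ⟨a, hb⟩ := hR b
  rcases eq_or_ne a 0 with rfl | ha
  · left; simpa using hb
  · right
    obtain ⟨c, hc⟩ := Ideal.mem_span_singleton'.mp hb
    have hnil : IsNilpotent (b - algebraMap K R a) :=
      hc ▸ (Commute.all c x).isNilpotent_mul_left hx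
    simpa using
      hnil.isUnit_add_right_of_commute ((Ne.isUnit ha).map (algebraMap K R)) (Commute.all _ _)

section Module

variable {R M : Type*} [CommRing R] [AddCommGroup M] [Module R M]

theorem exists_pow_smul_eq_forall_smul_ne {x : R} (hx : IsNilpotent x) {u : M} (hu : u ≠ 0) :
    ∃ (k : ℕ) (v : M), x ^ k • v = u ∧ ∀ w, x • w ≠ v := by
  by_contra! h
  have hdiv : ∀ k, ∃ v : M, x ^ k • v = u := by
    intro k
    induction k with
    | zero => exact ⟨u, by rw [pow_zero, one_smul]⟩
    | succ k ih =>
      obtain ⟨v, hv⟩ := ih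
      obtain ⟨w, rfl⟩ := h k v hv
      exact ⟨w, by rw [pow_succ, mul_smul, hv]⟩
  obtain ⟨n, hn⟩ := hx
  obtain ⟨v, hv⟩ := hdiv n
  rw [hn, zero_smul] at hv
  exact hu hv.symm

theorem Submodule.smul_ne_of_isCompl {V V' : Submodule R M} (h : IsCompl V V') {a : R} {v : V}
    (hv : ∀ w : V, a • w ≠ v) (w : M) : a • w ≠ v := fun hw =>
  hv (V.projectionOnto V' h w) (by rw [← map_smul, hw, projectionOnto_apply_left])

theorem exists_isUnit_apply_of_forall_smul_ne {ι : Type*} {x : R}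
    (hR : ∀ b : R, b ∈ Ideal.span {x} ∨ IsUnit b) {v : ι → R} (hv : ∀ w, x • w ≠ v) :
    ∃ i, IsUnit (v i) := by
  by_contra! h
  choose w hw using fun i => Ideal.mem_span_singleton'.mp ((hR (v i)).resolve_right (h i))
  exact hv w (funext fun i => by simp [← hw i, mul_comm])

theorem exists_apply_eq_one_of_isUnit_apply {ι : Type*} {v : ι → R} {i : ι} (hi : IsUnit (v i)) :
    ∃ f : (ι → R) →ₗ[R] R, f v = 1 :=
  ⟨(↑hi.unit⁻¹ : R) • LinearMap.proj i, hi.val_inv_mul⟩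

variable {f : M →ₗ[R] R} {v : M}

theorem LinearMap.toSpanSingleton_injective_of_apply_eq_one (hv : f v = 1) :
    Function.Injective (LinearMap.toSpanSingleton R M v) :=
  Function.LeftInverse.injective (g := f) fun a => by simp [hv]

theorem isCompl_span_singleton_ker_of_apply_eq_one (hv : f v = 1) :
    IsCompl (R ∙ v) (LinearMap.ker f) := by
  refine ⟨?_, ?_⟩
  · rw [disjoint_def]
    rintro z hz hzf
    obtain ⟨a, rfl⟩ := mem_span_singleton.mp hz
    simp only [LinearMap.mem_ker, map_smul, hv, smul_eq_mul, mul_one] at hzf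
    rw [hzf, zero_smul]
  · rw [codisjoint_iff_le_sup]
    intro z _
    exact mem_sup.mpr ⟨f z • v, smul_mem _ _ (mem_span_singleton_self v), z - f z • v,
      by simp [hv], add_sub_cancel _ _⟩

noncomputable def spanSingletonEquivOfApplyEqOne (hv : f v = 1) : R ≃ₗ[R] R ∙ v :=
  LinearEquiv.ofInjective _ (LinearMap.toSpanSingleton_injective_of_apply_eq_one hv) ≪≫ₗ
    LinearEquiv.ofEq _ _ (LinearMap.span_singleton_eq_range R M v).symm

theorem exists_ne_zero_eq_span_singleton_of_equiv_quotient {I : Ideal R} (hI : I ≠ ⊤)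
    {U : Submodule R M} (e : U ≃ₗ[R] R ⧸ I) : ∃ u : M, u ≠ 0 ∧ U = R ∙ u := by
  have := Ideal.Quotient.nontrivial_iff.mpr hI
  refine ⟨e.symm 1, by simp, le_antisymm (fun z hz => ?_)
    ((span_singleton_le_iff_mem _ _).mpr (coe_mem _))⟩
  obtain ⟨a, ha⟩ := Ideal.Quotient.mk_surjective (e ⟨z, hz⟩)
  refine mem_span_singleton.mpr ⟨a, ?_⟩
  have : a • e.symm 1 = ⟨z, hz⟩ := by
    rw [← map_smul, e.symm_apply_eq, ← ha, Algebra.smul_def, mul_one]; rfl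
  exact congrArg Subtype.val this

end Module

theorem minimal_summand_containing_Jr_general
    (p : ℕ) (hp : p.Prime)
    (K : Type) [Field K] [CharP K p]
    (A : Type) [CommGroup A] (σ : A) (hσ : orderOf σ = p)
    (hgen : ∀ a : A, a ∈ Subgroup.zpowers σ)
    (a' : ℕ)
    (r : ℕ) (hr1 : 1 ≤ r)
    (U V : Submodule (MonoidAlgebra K A) (Fin a' → MonoidAlgebra K A))
    (hU : Nonempty (U ≃ₗ[MonoidAlgebra K A] Jmod K A σ r))
    (hUV : U ≤ V)
    (hVsummand : ∃ V', IsCompl V V')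
    (hmin : ∀ V₂ : Submodule (MonoidAlgebra K A) (Fin a' → MonoidAlgebra K A),
      (∃ V₂', IsCompl V₂ V₂') → V₂ < V → ¬ U ≤ V₂) :
    Nonempty (V ≃ₗ[MonoidAlgebra K A] MonoidAlgebra K A) := by
  have : Fact p.Prime := ⟨hp⟩
  set x := MonoidAlgebra.of K A σ - 1
  have hx : IsNilpotent x :=
    ⟨p, MonoidAlgebra.of_sub_one_pow_char_eq_zero p (hσ ▸ pow_orderOf_eq_one σ)⟩
  have hpowers : ∀ g : A, g ∈ Submonoid.powers σ := fun g =>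
    (orderOf_pos_iff.mp (hσ ▸ hp.pos)).mem_powers_iff_mem_zpowers.mpr (hgen g)
  have hlocal := mem_span_singleton_or_isUnit_of_isNilpotent hx
    (MonoidAlgebra.exists_sub_algebraMap_mem_span_of_sub_one hpowers)
  obtain ⟨e⟩ := hU
  obtain ⟨V', hV⟩ := hVsummand
  have hI : Ideal.span {x ^ r} ≠ ⊤ := by
    rw [Ne, Ideal.span_singleton_eq_top]
    exact (hx.pow_of_pos (by omega)).not_isUnit
  obtain ⟨u, hu, rfl⟩ := exists_ne_zero_eq_span_singleton_of_equiv_quotient hI e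
  obtain ⟨k, v, hvu, hv⟩ := exists_pow_smul_eq_forall_smul_ne hx
    (u := (⟨u, hUV (mem_span_singleton_self u)⟩ : V)) (by simpa using hu)
  obtain ⟨i, hi⟩ := exists_isUnit_apply_of_forall_smul_ne hlocal (smul_ne_of_isCompl hV hv)
  obtain ⟨f, hf⟩ := exists_apply_eq_one_of_isUnit_apply hi
  have hVv : MonoidAlgebra K A ∙ (v : Fin a' → MonoidAlgebra K A) = V := by
    refine ((span_singleton_le_iff_mem _ _).mpr v.2).eq_of_not_lt fun hlt => hmin _
      ⟨_, isCompl_span_singleton_ker_of_apply_eq_one hf⟩ hlt ?_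
    rw [span_singleton_le_iff_mem, ← show x ^ k • (v : Fin a' → MonoidAlgebra K A) = u from
      congrArg Subtype.val hvu]
    exact smul_mem _ _ (mem_span_singleton_self _)
  exact ⟨(LinearEquiv.ofEq _ _ hVv).symm ≪≫ₗ (spanSingletonEquivOfApplyEqOne hf).symm⟩

/-- Let `A = ⟨σ⟩` be cyclic of order `p` over a field `K` of
characteristic `p`, let `W = K[A]^{a'}`, and let `U ⊆ W` be a submodule isomorphic to
`J_r` (`1 ≤ r ≤ p`).  If `V` is a direct summand of `W` containing `U` which is minimal
among direct summands of `W` containing `U`, then `V ≅ K[A]`. -/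
theorem minimal_summand_containing_Jr
    (p : ℕ) (hp : p.Prime)
    (K : Type) [Field K] [CharP K p]
    (A : Type) [CommGroup A] (σ : A) (hσ : orderOf σ = p)
    (hgen : ∀ a : A, a ∈ Subgroup.zpowers σ)
    (a' : ℕ) (ha' : 1 ≤ a')
    (r : ℕ) (hr1 : 1 ≤ r) (hr2 : r ≤ p)
    (U V : Submodule (MonoidAlgebra K A) (Fin a' → MonoidAlgebra K A))
    (hU : Nonempty (U ≃ₗ[MonoidAlgebra K A] Jmod K A σ r))
    (hUV : U ≤ V)
    (hVsummand : ∃ V', IsCompl V V')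
    (hmin : ∀ V₂ : Submodule (MonoidAlgebra K A) (Fin a' → MonoidAlgebra K A),
      (∃ V₂', IsCompl V₂ V₂') → V₂ < V → ¬ U ≤ V₂) :
    Nonempty (V ≃ₗ[MonoidAlgebra K A] MonoidAlgebra K A) :=
  minimal_summand_containing_Jr_general p hp K A σ hσ hgen a' r hr1 U V hU hUV hVsummand hmin
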